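/- Let s : ℝ × ℝ → ℝ be a strictly 𝓕₀-consistent scoring function for the mode, and let x₀ ≤ x₁ < x₂ ≤ x₃ be real numbers. Then ∫_{x₀}^{x₃} s(x₁, y) dy = ∫_{x₀}^{x₃} s(x₂, y) dy. -/

import Mathlib

open MeasureTheory Set Filter

/-- `f` belongs to `𝓕₀` with mode `x₀`: continuous, nonnegative, integrates to 1,
nondecreasing on `(-∞, x₀]`, nonincreasing on `[x₀, ∞)`, and `x₀` is the unique
local (hence global) maximum. -/
def IsUnimodalDensity (f : ℝ → ℝ) (x₀ : ℝ) : Prop :=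
  Continuous f ∧ (∀ y, 0 ≤ f y) ∧ (∫ y : ℝ, f y) = 1 ∧
    MonotoneOn f (Set.Iic x₀) ∧ AntitoneOn f (Set.Ici x₀) ∧
    ∀ x, x ≠ x₀ → f x < f x₀

/-- `f` belongs to the class `𝓕₀` of strictly unimodal distributions with
continuous Lebesgue density. -/
def MemF0 (f : ℝ → ℝ) : Prop := ∃ x₀, IsUnimodalDensity f x₀

/-- `s` is a strictly `𝓕₀`-consistent scoring function for the mode. -/
def StrictlyF0Consistent (s : ℝ × ℝ → ℝ) : Prop :=
  Measurable s ∧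
  (∀ x : ℝ, ∀ f : ℝ → ℝ, MemF0 f → Integrable (fun y => |s (x, y)| * f y)) ∧
  (∀ f : ℝ → ℝ, ∀ t : ℝ, IsUnimodalDensity f t → ∀ x : ℝ,
    (∫ y : ℝ, s (t, y) * f y) ≤ (∫ y : ℝ, s (x, y) * f y) ∧
    ((∫ y : ℝ, s (t, y) * f y) = (∫ y : ℝ, s (x, y) * f y) → x = t))

/-- `v` is a strict `𝓕₀`-identification function for the mode. -/
def StrictF0Identification (v : ℝ × ℝ → ℝ) : Prop :=
  Measurable v ∧
  (∀ x : ℝ, ∀ f : ℝ → ℝ, MemF0 f → Integrable (fun y => |v (x, y)| * f y)) ∧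
  (∀ f : ℝ → ℝ, ∀ t : ℝ, IsUnimodalDensity f t → ∀ x : ℝ,
    (∫ y : ℝ, v (x, y) * f y) = 0 ↔ x = t)

open Topology

/-!
For `t ∈ [a, b]`, the functions `modeProbe a b t ε` (a trapezoid that is `1` on `[a, b]`, plus a
tent of height `ε` at `t`) are, after normalization, densities in `𝓕₀` with mode `t`, and they
converge to the indicator of `[a, b]` as `ε → 0⁺`. Consistency of `s` compares the expected scores
at `t` and at `x` under each of them; dominated convergence carries the comparison to the limit,
giving `∫_{[a,b]} s(t, ·) ≤ ∫_{[a,b]} s(x, ·)` for every `t ∈ [a, b]` and every `x`. Exchanging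
the roles of `x₁` and `x₂` gives the equality.
-/

/-- A positive multiple of a density in `𝓕₀` with mode `t`. -/
def IsUnimodalProfile (g : ℝ → ℝ) (t : ℝ) : Prop :=
  Continuous g ∧ (∀ y, 0 ≤ g y) ∧ Integrable g ∧
    MonotoneOn g (Iic t) ∧ AntitoneOn g (Ici t) ∧ ∀ x, x ≠ t → g x < g t

namespace IsUnimodalProfile

variable {g h : ℝ → ℝ} {t : ℝ}

theorem integral_pos (hg : IsUnimodalProfile g t) : 0 < ∫ y, g y := by
  obtain ⟨hc, h0, hi, -, -, hmax⟩ := hg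
  rw [integral_pos_iff_support_of_nonneg h0 hi]
  have ht : g t ≠ 0 := (lt_of_le_of_lt (h0 (t + 1)) (hmax _ (by linarith))).ne'
  exact hc.isOpen_support.measure_pos volume ⟨t, ht⟩

theorem const_mul (hg : IsUnimodalProfile g t) {c : ℝ} (hc : 0 < c) :
    IsUnimodalProfile (fun y => c * g y) t := by
  obtain ⟨hcont, h0, hi, hmono, hanti, hmax⟩ := hg
  exact ⟨continuous_const.mul hcont, fun y => mul_nonneg hc.le (h0 y), hi.const_mul c,
    fun y hy z hz hyz => mul_le_mul_of_nonneg_left (hmono hy hz hyz) hc.le,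
    fun y hy z hz hyz => mul_le_mul_of_nonneg_left (hanti hy hz hyz) hc.le,
    fun x hx => mul_lt_mul_of_pos_left (hmax x hx) hc⟩

theorem isUnimodalDensity_inv_integral_mul (hg : IsUnimodalProfile g t) :
    IsUnimodalDensity (fun y => (∫ z, g z)⁻¹ * g y) t := by
  have hI := hg.integral_pos
  obtain ⟨hcont, h0, -, hmono, hanti, hmax⟩ := hg.const_mul (inv_pos.2 hI)
  exact ⟨hcont, h0, by rw [integral_const_mul, inv_mul_cancel₀ hI.ne'], hmono, hanti, hmax⟩

theorem add (hg : IsUnimodalProfile g t) (hcont : Continuous h) (h0 : ∀ y, 0 ≤ h y)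
    (hi : Integrable h) (hmono : MonotoneOn h (Iic t)) (hanti : AntitoneOn h (Ici t)) :
    IsUnimodalProfile (fun y => h y + g y) t := by
  obtain ⟨hcont', h0', hi', hmono', hanti', hmax'⟩ := hg
  refine ⟨hcont.add hcont', fun y => add_nonneg (h0 y) (h0' y), hi.add hi',
    hmono.add hmono', hanti.add hanti', fun x hx => add_lt_add_of_le_of_lt ?_ (hmax' x hx)⟩
  rcases le_total x t with hxt | htx
  · exact hmono hxt (mem_Iic.2 le_rfl) hxt
  · exact hanti (mem_Ici.2 le_rfl) htx htx

end IsUnimodalProfile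

noncomputable def distIcc (a b y : ℝ) : ℝ := max 0 (max (a - y) (y - b))

/-- Equal to `1` on `[a, b]`, to `0` outside `[a - ε, b + ε]`, and affine in between;
`trapezoid t t 1` is the tent of height `1` at `t`. -/
noncomputable def trapezoid (a b ε y : ℝ) : ℝ := max 0 (1 - distIcc a b y / ε)

section Trapezoid

variable {a b ε y : ℝ}

theorem distIcc_nonneg : 0 ≤ distIcc a b y := le_max_left _ _

theorem continuous_distIcc : Continuous (distIcc a b) := by
  unfold distIcc; fun_prop

theorem distIcc_eq_zero (hy : y ∈ Icc a b) : distIcc a b y = 0 :=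
  max_eq_left (max_le (by linarith [hy.1]) (by linarith [hy.2]))

theorem distIcc_pos (hy : y ∉ Icc a b) : 0 < distIcc a b y := by
  rw [mem_Icc, not_and_or, not_le, not_le] at hy
  refine lt_max_of_lt_right ?_
  rcases hy with hy | hy
  · exact lt_max_of_lt_left (by linarith)
  · exact lt_max_of_lt_right (by linarith)

theorem le_distIcc (hy : y ∉ Icc (a - ε) (b + ε)) : ε ≤ distIcc a b y := by
  rw [mem_Icc, not_and_or, not_le, not_le] at hy
  refine le_max_of_le_right ?_
  rcases hy with hy | hy
  · exact le_max_of_le_left (by linarith)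
  · exact le_max_of_le_right (by linarith)

theorem distIcc_antitoneOn : AntitoneOn (distIcc a b) (Iic b) := by
  intro y hy z hz hyz
  rw [mem_Iic] at hy hz
  refine max_le (le_max_left _ _) (max_le ?_ (le_max_of_le_left (by linarith)))
  exact le_max_of_le_right (le_max_of_le_left (by linarith))

theorem distIcc_monotoneOn : MonotoneOn (distIcc a b) (Ici a) := by
  intro y hy z hz hyz
  rw [mem_Ici] at hy hz
  refine max_le (le_max_left _ _) (max_le (le_max_of_le_left (by linarith)) ?_)
  exact le_max_of_le_right (le_max_of_le_right (by linarith))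

theorem continuous_trapezoid : Continuous (trapezoid a b ε) :=
  continuous_const.max (continuous_const.sub (continuous_distIcc.div_const ε))

theorem trapezoid_nonneg : 0 ≤ trapezoid a b ε y := le_max_left _ _

theorem trapezoid_le_one (hε : 0 ≤ ε) : trapezoid a b ε y ≤ 1 :=
  max_le zero_le_one (sub_le_self _ (div_nonneg distIcc_nonneg hε))

theorem trapezoid_eq_one (hy : y ∈ Icc a b) : trapezoid a b ε y = 1 := by
  simp [trapezoid, distIcc_eq_zero hy]

theorem trapezoid_lt_one (hε : 0 < ε) (hy : y ∉ Icc a b) : trapezoid a b ε y < 1 :=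
  max_lt zero_lt_one (sub_lt_self _ (div_pos (distIcc_pos hy) hε))

theorem trapezoid_eq_zero (hε : 0 < ε) (hy : ε ≤ distIcc a b y) : trapezoid a b ε y = 0 :=
  max_eq_left (sub_nonpos.2 ((one_le_div hε).2 hy))

theorem trapezoid_monotoneOn (hε : 0 ≤ ε) : MonotoneOn (trapezoid a b ε) (Iic b) :=
  fun _ hy _ hz hyz => max_le_max le_rfl
    (sub_le_sub_left (div_le_div_of_nonneg_right (distIcc_antitoneOn hy hz hyz) hε) 1)

theorem trapezoid_antitoneOn (hε : 0 ≤ ε) : AntitoneOn (trapezoid a b ε) (Ici a) :=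
  fun _ hy _ hz hyz => max_le_max le_rfl
    (sub_le_sub_left (div_le_div_of_nonneg_right (distIcc_monotoneOn hy hz hyz) hε) 1)

theorem integrable_trapezoid (hε : 0 < ε) : Integrable (trapezoid a b ε) :=
  continuous_trapezoid.integrable_of_hasCompactSupport
    (HasCompactSupport.intro isCompact_Icc fun _ hy => trapezoid_eq_zero hε (le_distIcc hy))

theorem tendsto_trapezoid (a b y : ℝ) :
    Tendsto (fun ε => trapezoid a b ε y) (𝓝[>] 0) (𝓝 ((Icc a b).indicator 1 y)) := by
  by_cases hy : y ∈ Icc a b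
  · simp only [trapezoid_eq_one hy, indicator_of_mem hy, Pi.one_apply, tendsto_const_nhds]
  · rw [indicator_of_notMem hy]
    refine tendsto_const_nhds.congr' ?_
    filter_upwards [Ioo_mem_nhdsGT (distIcc_pos hy)] with ε hε
    exact (trapezoid_eq_zero hε.1 hε.2.le).symm

end Trapezoid

theorem isUnimodalProfile_tent (t : ℝ) : IsUnimodalProfile (trapezoid t t 1) t := by
  refine ⟨continuous_trapezoid, fun _ => trapezoid_nonneg, integrable_trapezoid one_pos,
    trapezoid_monotoneOn zero_le_one, trapezoid_antitoneOn zero_le_one, fun x hx => ?_⟩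
  rw [trapezoid_eq_one ⟨le_rfl, le_rfl⟩]
  exact trapezoid_lt_one one_pos fun h => hx (le_antisymm h.2 h.1)

noncomputable def modeProbe (a b t ε y : ℝ) : ℝ := trapezoid a b ε y + ε * trapezoid t t 1 y

section ModeProbe

variable {a b t ε y : ℝ}

theorem continuous_modeProbe : Continuous (modeProbe a b t ε) :=
  continuous_trapezoid.add (continuous_const.mul continuous_trapezoid)

theorem isUnimodalProfile_modeProbe (ht : t ∈ Icc a b) (hε : 0 < ε) :
    IsUnimodalProfile (modeProbe a b t ε) t :=
  ((isUnimodalProfile_tent t).const_mul hε).add continuous_trapezoid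
    (fun _ => trapezoid_nonneg) (integrable_trapezoid hε)
    ((trapezoid_monotoneOn hε.le).mono (Iic_subset_Iic.2 ht.2))
    ((trapezoid_antitoneOn hε.le).mono (Ici_subset_Ici.2 ht.1))

theorem modeProbe_nonneg (hε : 0 ≤ ε) : 0 ≤ modeProbe a b t ε y :=
  add_nonneg trapezoid_nonneg (mul_nonneg hε trapezoid_nonneg)

theorem modeProbe_le_indicator (ht : t ∈ Icc a b) (hε : ε ∈ Ioc 0 1) :
    modeProbe a b t ε y ≤ (Icc (a - 1) (b + 1)).indicator (fun _ => 2) y := by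
  by_cases hy : y ∈ Icc (a - 1) (b + 1)
  · rw [indicator_of_mem hy, modeProbe]
    have h1 := trapezoid_le_one (a := a) (b := b) (y := y) hε.1.le
    have h2 := trapezoid_le_one (a := t) (b := t) (y := y) zero_le_one
    nlinarith [hε.2, trapezoid_nonneg (a := t) (b := t) (ε := 1) (y := y)]
  · have hab : y ∉ Icc (a - ε) (b + ε) :=
      fun h => hy (Icc_subset_Icc (by linarith [hε.2]) (by linarith [hε.2]) h)
    have htt : y ∉ Icc (t - 1) (t + 1) :=
      fun h => hy (Icc_subset_Icc (by linarith [ht.1]) (by linarith [ht.2]) h)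
    rw [indicator_of_notMem hy, modeProbe, trapezoid_eq_zero hε.1 (le_distIcc hab),
      trapezoid_eq_zero one_pos (le_distIcc htt), mul_zero, add_zero]

theorem tendsto_modeProbe (a b t y : ℝ) :
    Tendsto (fun ε => modeProbe a b t ε y) (𝓝[>] 0) (𝓝 ((Icc a b).indicator 1 y)) := by
  have htent : Tendsto (fun ε : ℝ => ε * trapezoid t t 1 y) (𝓝[>] 0) (𝓝 0) := by
    simpa using ((continuous_mul_const (trapezoid t t 1 y)).tendsto 0).mono_left
      nhdsWithin_le_nhds
  have h := (tendsto_trapezoid a b y).add htent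
  rwa [add_zero] at h

end ModeProbe

namespace StrictlyF0Consistent

variable {s : ℝ × ℝ → ℝ} {g : ℝ → ℝ} {t : ℝ}

theorem measurable_section (hs : StrictlyF0Consistent s) (x : ℝ) :
    Measurable fun y => s (x, y) :=
  hs.1.comp measurable_prodMk_left

theorem integral_mul_le (hs : StrictlyF0Consistent s) (hg : IsUnimodalProfile g t) (x : ℝ) :
    ∫ y, s (t, y) * g y ≤ ∫ y, s (x, y) * g y := by
  have hc : 0 < (∫ z, g z)⁻¹ := inv_pos.2 hg.integral_pos
  have hle := (hs.2.2 _ t hg.isUnimodalDensity_inv_integral_mul x).1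
  simp only [mul_left_comm _ (∫ z, g z)⁻¹, integral_const_mul] at hle
  exact le_of_mul_le_mul_left hle hc

theorem integrable_abs_mul (hs : StrictlyF0Consistent s) (hg : IsUnimodalProfile g t)
    (x : ℝ) : Integrable fun y => |s (x, y)| * g y := by
  have hc : (∫ z, g z) ≠ 0 := hg.integral_pos.ne'
  have hi := (hs.2.1 x _ ⟨t, hg.isUnimodalDensity_inv_integral_mul⟩).const_mul (∫ z, g z)
  refine hi.congr (ae_of_all _ fun y => ?_)
  field_simp

theorem integrableOn_Icc (hs : StrictlyF0Consistent s) (x a b : ℝ) :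
    IntegrableOn (fun y => s (x, y)) (Icc a b) := by
  rcases lt_or_ge b a with hba | hab
  · simp [Icc_eq_empty_of_lt hba]
  have hprobe := isUnimodalProfile_modeProbe (ε := 1) (left_mem_Icc.2 hab)
  refine ((hs.integrable_abs_mul (hprobe one_pos) x).integrableOn).mono'
    (hs.measurable_section x).aestronglyMeasurable.restrict
    ((ae_restrict_iff' measurableSet_Icc).2 (ae_of_all _ fun y hy => ?_))
  rw [Real.norm_eq_abs]
  refine le_mul_of_one_le_right (abs_nonneg _) ?_
  rw [modeProbe, trapezoid_eq_one hy]
  linarith [trapezoid_nonneg (a := a) (b := a) (ε := 1) (y := y)]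

theorem tendsto_integral_mul_modeProbe (hs : StrictlyF0Consistent s) {a b : ℝ}
    (ht : t ∈ Icc a b) (x : ℝ) :
    Tendsto (fun ε => ∫ y, s (x, y) * modeProbe a b t ε y) (𝓝[>] 0)
      (𝓝 (∫ y in Icc a b, s (x, y))) := by
  rw [← integral_indicator measurableSet_Icc]
  refine tendsto_integral_filter_of_dominated_convergence
    ((Icc (a - 1) (b + 1)).indicator fun y => |s (x, y)| * 2)
    (Eventually.of_forall fun _ =>
      ((hs.measurable_section x).mul continuous_modeProbe.measurable).aestronglyMeasurable)
    ?_ (IntegrableOn.integrable_indicator ((hs.integrableOn_Icc x _ _).abs.mul_const 2)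
      measurableSet_Icc)
    (ae_of_all _ fun y => ?_)
  · filter_upwards [Ioc_mem_nhdsGT one_pos] with ε hε
    refine ae_of_all _ fun y => ?_
    rw [norm_mul, Real.norm_eq_abs, Real.norm_eq_abs, abs_of_nonneg (modeProbe_nonneg hε.1.le),
      indicator_mul_right]
    exact mul_le_mul_of_nonneg_left (modeProbe_le_indicator ht hε) (abs_nonneg _)
  · convert (tendsto_modeProbe a b t y).const_mul (s (x, y)) using 2
    by_cases hy : y ∈ Icc a b <;> simp [hy]

theorem setIntegral_Icc_le (hs : StrictlyF0Consistent s) {a b : ℝ} (ht : t ∈ Icc a b)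
    (x : ℝ) : ∫ y in Icc a b, s (t, y) ≤ ∫ y in Icc a b, s (x, y) :=
  le_of_tendsto_of_tendsto (hs.tendsto_integral_mul_modeProbe ht t)
    (hs.tendsto_integral_mul_modeProbe ht x)
    (eventually_nhdsWithin_of_forall fun _ hε =>
      hs.integral_mul_le (isUnimodalProfile_modeProbe ht hε) x)

end StrictlyF0Consistent

/-- If `s` is strictly 𝓕₀-consistent for the mode and `x₀ ≤ x₁ < x₂ ≤ x₃`, then
the integrals of the sections at `x₁` and `x₂` over `[x₀, x₃]` agree. -/
theorem score_intervalIntegral_eq (s : ℝ × ℝ → ℝ) (hs : StrictlyF0Consistent s)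
    (x₀ x₁ x₂ x₃ : ℝ) (h01 : x₀ ≤ x₁) (h12 : x₁ < x₂) (h23 : x₂ ≤ x₃) :
    (∫ y in x₀..x₃, s (x₁, y)) = ∫ y in x₀..x₃, s (x₂, y) := by
  have hx₁ : x₁ ∈ Icc x₀ x₃ := ⟨h01, h12.le.trans h23⟩
  have hx₂ : x₂ ∈ Icc x₀ x₃ := ⟨h01.trans h12.le, h23⟩
  simp only [intervalIntegral.integral_of_le (hx₁.1.trans hx₁.2),
    ← integral_Icc_eq_integral_Ioc]
  exact le_antisymm (hs.setIntegral_Icc_le hx₁ x₂) (hs.setIntegral_Icc_le hx₂ x₁)
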